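/- Let n ≥ 1, let y : Fin n → ℝ take values in {−1,1}, and let H be a nonempty set of functions Fin n → ℝ taking values in {−1,1}. Let opt = inf over h' ∈ H of the empirical error |{i : h'(i) ≠ y(i)}|/n. Let β ∈ [0,1/2), set γ = (1/2)·(1/2 − β), let ε ∈ (0,1], set ε'' = 2·opt/(1/2−β) + ε, and assume ε'' ≤ 1. Let T be a natural number with T > 2·log(1/ε'')/γ². Suppose we are given hypotheses h¹,…,h^T : Fin n → ℝ with values in {−1,1} and distributions D¹,…,D^T on Fin n such that: (i) D¹ is uniform; (ii) each D^t is ε''-smooth; (iii) (β-weak agnostic learner) for every t, ∑_{i : h^t(i) ≠ y(i)} D^t(i) ≤ (inf over h' ∈ H of ∑_{i : h'(i) ≠ y(i)} D^t(i)) + β; (iv) for every t < T, letting ℓ^t(i) = 1[h^t(i) = y(i)], Z^t = ∑_i D^t(i)·(1−γ)^{ℓ^t(i)}, and D̂^{t+1}(i) = D^t(i)·(1−γ)^{ℓ^t(i)}/Z^t, the distribution D^{t+1} satisfies RE(D^{t+1} ‖ D̂^{t+1}) ≤ RE(D ‖ D̂^{t+1}) for every ε''-smooth distribution D on Fin n.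 Then the cardinality of {i : y(i)·∑_{t=1}^T h^t(i) ≤ 0} is strictly less than (2·opt/(1/2−β) + ε)·n. -/

import Mathlib

/-!
If at least `ε'' n` sample points had nonpositive margin, the uniform distribution `P` on them
would be `ε''`-smooth. Track the potential `RE(P ‖ D t)`: it starts below `log (1/ε'')`
(smoothness of `P` against the uniform `D 0`) and never becomes negative. Smoothness of `D t`
turns the weak learner's guarantee into the edge `err(h t) ≤ 1/2 - γ`, because
`opt / ε'' ≤ γ`; the multiplicative step then lowers the potential by at least
`γ (1/2 + γ) + log (1 - γ) · P{h t correct}`, and the Pythagorean inequality for relative-entropy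
projections onto the convex set of smooth distributions keeps the projection from undoing this.
Each point of low margin is classified correctly in at most half of the rounds, so over `T`
rounds the potential drops by at least `T γ² / 2 > log (1/ε'')`, a contradiction.
-/

/-- `D` is a probability distribution on `Fin n`. -/
def IsDistribution {n : ℕ} (D : Fin n → ℝ) : Prop :=
  (∀ i, 0 ≤ D i) ∧ ∑ i, D i = 1

/-- `D` is `ε`-smooth: every coordinate is at most `1/(ε·n)`. -/
def IsSmooth {n : ℕ} (ε : ℝ) (D : Fin n → ℝ) : Prop :=
  ∀ i, D i ≤ 1 / (ε * n)

/-- Relative entropy `RE(p ‖ q) = ∑ i, p i · log (p i / q i)`, where terms with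
`p i = 0` contribute `0`. -/
noncomputable def RE {n : ℕ} (p q : Fin n → ℝ) : ℝ :=
  ∑ i, if p i = 0 then 0 else p i * Real.log (p i / q i)

open Real Finset Filter Topology

theorem sub_le_mul_log_div {p q : ℝ} (hp : 0 ≤ p) (hq : 0 < q) : p - q ≤ p * log (p / q) := by
  rcases hp.eq_or_lt with rfl | hp
  · simpa using hq.le
  · have h := one_sub_inv_le_log_of_pos (div_pos hp hq)
    rw [inv_div] at h
    calc p - q = p * (1 - q / p) := by field_simp
      _ ≤ p * log (p / q) := mul_le_mul_of_nonneg_left h hp.le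

theorem mul_log_div_le {x a : ℝ} (hx : 0 ≤ x) (ha : 0 < a) :
    x * log (x / a) ≤ x * (x / a - 1) := by
  rcases hx.eq_or_lt with rfl | hx
  · simp
  · exact mul_le_mul_of_nonneg_left (log_le_sub_one_of_pos (div_pos hx ha)) hx.le

theorem mul_log_div_eq_add {p a b : ℝ} (hp : 0 ≤ p) (ha : 0 < a) (hb : 0 < b) :
    p * log (p / a) = p * log (p / b) + p * log (b / a) := by
  rcases hp.eq_or_lt with rfl | hp
  · simp
  · rw [← mul_add, ← log_mul (div_pos hp hb).ne' (div_pos hb ha).ne',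
      div_mul_div_cancel₀ hb.ne']

theorem mul_log_div_le_quadratic {x a q : ℝ} (hx : 0 ≤ x) (ha : 0 < a) (hq : 0 < q) :
    x * log (x / q) ≤
      a * log (a / q) + (x - a) + (x - a) * log (a / q) + (x - a) ^ 2 / a := by
  have h := mul_log_div_le hx ha
  have hsq : x * (x / a - 1) = (x - a) + (x - a) ^ 2 / a := by field_simp; ring
  rw [mul_log_div_eq_add hx hq ha]
  linarith

theorem neg_log_one_sub_le {γ : ℝ} (h0 : 0 ≤ γ) (h1 : γ ≤ 1 / 2) :
    -log (1 - γ) ≤ γ + γ ^ 2 := by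
  have hexp := quadratic_le_exp_of_nonneg (x := γ + γ ^ 2) (by positivity)
  have hcubic : 0 ≤ 1 - γ - γ ^ 2 - γ ^ 3 := by nlinarith
  have hpoly : 1 ≤ (1 - γ) * (1 + (γ + γ ^ 2) + (γ + γ ^ 2) ^ 2 / 2) := by
    nlinarith [mul_nonneg (sq_nonneg γ) hcubic]
  rw [neg_le, le_log_iff_exp_le (by linarith), exp_neg]
  calc (exp (γ + γ ^ 2))⁻¹ ≤ (1 + (γ + γ ^ 2) + (γ + γ ^ 2) ^ 2 / 2)⁻¹ :=
        inv_anti₀ (by positivity) hexp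
    _ ≤ 1 - γ := by rw [inv_le_iff_one_le_mul₀ (by positivity)]; linarith

theorem nonneg_of_forall_mul_add_sq_nonneg {S C : ℝ}
    (h : ∀ t ∈ Set.Ioc (0 : ℝ) 1, 0 ≤ t * S + t ^ 2 * C) : 0 ≤ S := by
  have hlim : Tendsto (fun t => S + t * C) (𝓝[>] 0) (𝓝 S) := by
    have : Continuous fun t : ℝ => S + t * C := by fun_prop
    simpa using (this.tendsto 0).mono_left nhdsWithin_le_nhds
  refine ge_of_tendsto hlim ?_
  filter_upwards [Ioo_mem_nhdsGT (zero_lt_one' ℝ)] with t ht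
  have := h t ⟨ht.1, ht.2.le⟩
  nlinarith [ht.1]

theorem nonneg_add_sum_of_le_add {Φ g : ℕ → ℝ} {T : ℕ} (h0 : 0 ≤ Φ 0)
    (hstep : ∀ t, t + 1 < T → Φ (t + 1) ≤ Φ t + g t) (hlast : ∀ t < T, 0 ≤ Φ t + g t) :
    0 ≤ Φ 0 + ∑ t ∈ range T, g t := by
  have hbound : ∀ t < T, Φ t ≤ Φ 0 + ∑ s ∈ range t, g s := by
    intro t
    induction t with
    | zero => simp
    | succ t ih =>
      intro ht
      rw [sum_range_succ]
      linarith [ih (by omega), hstep t ht]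
  cases T with
  | zero => simpa using h0
  | succ T =>
    rw [sum_range_succ]
    linarith [hbound T T.lt_succ_self, hlast T T.lt_succ_self]

variable {n : ℕ}

theorem RE_eq_sum (p q : Fin n → ℝ) : RE p q = ∑ i, p i * log (p i / q i) :=
  sum_congr rfl fun i _ => by split_ifs with h <;> simp [h]

theorem RE_nonneg {p q : Fin n → ℝ} (hp : IsDistribution p) (hq : ∀ i, 0 < q i)
    (hq1 : ∑ i, q i ≤ 1) : 0 ≤ RE p q := by
  rw [RE_eq_sum]
  calc 0 ≤ ∑ i, p i - ∑ i, q i := by rw [hp.2]; linarith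
    _ = ∑ i, (p i - q i) := (sum_sub_distrib ..).symm
    _ ≤ ∑ i, p i * log (p i / q i) := sum_le_sum fun i _ => sub_le_mul_log_div (hp.1 i) (hq i)

theorem RE_mul_div_eq {p q w : Fin n → ℝ} {Z : ℝ} (hp : IsDistribution p) (hq : ∀ i, 0 < q i)
    (hw : ∀ i, 0 < w i) (hZ : 0 < Z) :
    RE p (fun i => q i * w i / Z) = RE p q + (log Z - ∑ i, p i * log (w i)) := by
  have hterm : ∀ i, p i * log (p i / (q i * w i / Z)) =
      p i * log (p i / q i) + p i * log Z - p i * log (w i) := fun i => by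
    rw [mul_log_div_eq_add (hp.1 i) (by have := hq i; have := hw i; positivity) (hq i),
      div_div_eq_mul_div, mul_div_mul_left _ _ (hq i).ne', log_div hZ.ne' (hw i).ne']
    ring
  simp only [RE_eq_sum, hterm, sum_sub_distrib, sum_add_distrib, ← sum_mul, hp.2, one_mul]
  ring

/-- First-order optimality of `M` along the segment towards `P`: the one-sided derivative of
`RE (M + t • (P - M)) q` at `t = 0` is this sum. -/
theorem sum_sub_mul_log_div_nonneg_of_isMinOn {K : Set (Fin n → ℝ)} (hK : Convex ℝ K)
    (hKd : ∀ P ∈ K, IsDistribution P) {q M P : Fin n → ℝ} (hq : ∀ i, 0 < q i)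
    (hM : ∀ i, 0 < M i) (hMK : M ∈ K) (hmin : IsMinOn (RE · q) K M) (hPK : P ∈ K) :
    0 ≤ ∑ i, (P i - M i) * log (M i / q i) := by
  refine nonneg_of_forall_mul_add_sq_nonneg (C := ∑ i, (P i - M i) ^ 2 / M i) fun t ht => ?_
  have hxK : M + t • (P - M) ∈ K := hK.add_smul_sub_mem hMK hPK ⟨ht.1.le, ht.2⟩
  have hdiff : ∑ i, (P i - M i) = 0 := by
    rw [sum_sub_distrib, (hKd P hPK).2, (hKd M hMK).2, sub_self]
  have hupper : RE (M + t • (P - M)) q ≤ RE M q + t * ∑ i, (P i - M i) +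
      t * ∑ i, (P i - M i) * log (M i / q i) + t ^ 2 * ∑ i, (P i - M i) ^ 2 / M i :=
    calc RE (M + t • (P - M)) q
        ≤ ∑ i, (M i * log (M i / q i) + t * (P i - M i) +
            t * ((P i - M i) * log (M i / q i)) + t ^ 2 * ((P i - M i) ^ 2 / M i)) := by
          rw [RE_eq_sum]
          refine sum_le_sum fun i _ => ?_
          have h := mul_log_div_le_quadratic ((hKd _ hxK).1 i) (hM i) (hq i)
          simp only [Pi.add_apply, Pi.smul_apply, Pi.sub_apply, smul_eq_mul,
            add_sub_cancel_left] at h ⊢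
          exact h.trans_eq (by ring)
      _ = _ := by simp only [RE_eq_sum, sum_add_distrib, mul_sum]
  have hM_le : RE M q ≤ RE (M + t • (P - M)) q := hmin hxK
  rw [hdiff, mul_zero, add_zero] at hupper
  linarith

/-- The Pythagorean inequality for the relative-entropy projection `M` of `q` onto `K`. -/
theorem RE_le_RE_of_isMinOn {K : Set (Fin n → ℝ)} (hK : Convex ℝ K)
    (hKd : ∀ P ∈ K, IsDistribution P) {q M P : Fin n → ℝ} (hq : ∀ i, 0 < q i)
    (hq1 : ∑ i, q i ≤ 1) (hM : ∀ i, 0 < M i) (hMK : M ∈ K) (hmin : IsMinOn (RE · q) K M)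
    (hPK : P ∈ K) : RE P M ≤ RE P q := by
  have hsplit : RE P q = RE P M + (∑ i, (P i - M i) * log (M i / q i) + RE M q) := by
    simp only [RE_eq_sum, ← sum_add_distrib]
    refine sum_congr rfl fun i _ => ?_
    rw [mul_log_div_eq_add ((hKd P hPK).1 i) (hq i) (hM i)]
    ring
  linarith [sum_sub_mul_log_div_nonneg_of_isMinOn hK hKd hq hM hMK hmin hPK,
    RE_nonneg (hKd M hMK) hq hq1]

def smoothDistributions (n : ℕ) (ε : ℝ) : Set (Fin n → ℝ) :=
  {D | IsDistribution D ∧ IsSmooth ε D}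

theorem convex_smoothDistributions (ε : ℝ) : Convex ℝ (smoothDistributions n ε) := by
  rintro x ⟨hx, hxs⟩ z ⟨hz, hzs⟩ a b ha hb hab
  refine ⟨convex_stdSimplex ℝ (Fin n) hx hz ha hb hab, fun i => ?_⟩
  calc a * x i + b * z i ≤ a * (1 / (ε * n)) + b * (1 / (ε * n)) := by
        gcongr
        exacts [hxs i, hzs i]
    _ = 1 / (ε * n) := by rw [← add_mul, hab, one_mul]

theorem transfer_mem_smoothDistributions {ε : ℝ} {M : Fin n → ℝ}
    (hM : M ∈ smoothDistributions n ε) {j k : Fin n} (hjk : j ≠ k) {δ : ℝ} (hδ : 0 ≤ δ)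
    (hδj : δ ≤ M j) (hδk : M k + δ ≤ 1 / (ε * n)) :
    M + Pi.single k δ - Pi.single j δ ∈ smoothDistributions n ε := by
  refine ⟨⟨fun i => ?_, by simp [sum_add_distrib, sum_sub_distrib, hM.1.2]⟩, fun i => ?_⟩
  · rcases eq_or_ne i j with rfl | hij
    · simp [hjk, hδj]
    · simp only [Pi.add_apply, Pi.sub_apply, Pi.single_apply, hij, if_false, sub_zero]
      split_ifs <;> linarith [hM.1.1 i]
  · rcases eq_or_ne i k with rfl | hik
    · simpa [hjk.symm] using hδk
    · simp only [Pi.add_apply, Pi.sub_apply, Pi.single_apply, hik, if_false, add_zero]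
      split_ifs <;> linarith [hM.2 i]

/-- Moving a little mass from a charged coordinate onto an empty one decreases relative
entropy at first order, because `δ log δ` has infinite slope at `0`. -/
theorem pos_of_isMinOn_smoothDistributions {ε : ℝ} (hε : 0 < ε) {q M : Fin n → ℝ}
    (hq : ∀ i, 0 < q i) (hM : M ∈ smoothDistributions n ε)
    (hmin : IsMinOn (RE · q) (smoothDistributions n ε) M) (k : Fin n) : 0 < M k := by
  by_contra hk
  have hMk : M k = 0 := le_antisymm (not_lt.mp hk) (hM.1.1 k)
  obtain ⟨j, -, hj⟩ : ∃ j ∈ univ, (0 : Fin n → ℝ) j < M j :=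
    exists_lt_of_sum_lt (by simp [hM.1.2])
  replace hj : 0 < M j := hj
  have hjk : j ≠ k := by rintro rfl; linarith
  have hcap : 0 < 1 / (ε * n) := by have := k.pos; positivity
  obtain ⟨δ, hδ, hδlt⟩ := exists_between (lt_min (lt_min hj hcap)
    (by have := hq j; have := hq k; positivity : 0 < M j / q j * q k))
  simp only [lt_min_iff] at hδlt
  obtain ⟨⟨hδj, hδcap⟩, hδq⟩ := hδlt
  have hP := transfer_mem_smoothDistributions hM hjk hδ.le hδj.le
    (by rw [hMk, zero_add]; exact hδcap.le)
  have hdiff : RE (M + Pi.single k δ - Pi.single j δ) q - RE M q = δ * log (δ / q k) +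
      ((M j - δ) * log ((M j - δ) / q j) - M j * log (M j / q j)) := by
    rw [RE_eq_sum, RE_eq_sum, ← sum_sub_distrib, Fintype.sum_eq_add k j hjk.symm
      fun i hi => by simp [hi.1, hi.2]]
    simp [hjk, hjk.symm, hMk]
  have hj_le : log ((M j - δ) / q j) ≤ log (M j / q j) :=
    log_le_log (div_pos (by linarith) (hq j)) (by gcongr; exacts [(hq j).le, by linarith])
  have hk_lt : log (δ / q k) < log (M j / q j) :=
    log_lt_log (div_pos hδ (hq k)) ((div_lt_iff₀ (hq k)).2 hδq)
  have hmin_le : RE M q ≤ RE (M + Pi.single k δ - Pi.single j δ) q := hmin hP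
  nlinarith [mul_le_mul_of_nonneg_left hj_le (by linarith : 0 ≤ M j - δ)]

theorem RE_uniform_le {ε : ℝ} (hε : 0 < ε) {P : Fin n → ℝ}
    (hP : P ∈ smoothDistributions n ε) :
    RE P (fun _ => 1 / n) ≤ log (1 / ε) := by
  rw [RE_eq_sum]
  calc ∑ i, P i * log (P i / (1 / n)) ≤ ∑ i, P i * log (1 / ε) := sum_le_sum fun i _ => ?_
    _ = log (1 / ε) := by rw [← sum_mul, hP.1.2, one_mul]
  rcases (hP.1.1 i).eq_or_lt with h | h
  · simp [← h]
  have hn : (0 : ℝ) < n := by exact_mod_cast i.pos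
  refine mul_le_mul_of_nonneg_left (log_le_log (by positivity) ?_) h.le
  calc P i / (1 / n) = P i * n := by field_simp
    _ ≤ 1 / (ε * n) * n := by gcongr; exact hP.2 i
    _ = 1 / ε := by field_simp

noncomputable def uniformOn (B : Finset (Fin n)) : Fin n → ℝ :=
  fun i => if i ∈ B then (#B : ℝ)⁻¹ else 0

theorem mem_of_uniformOn_ne_zero {B : Finset (Fin n)} {i : Fin n} (hi : uniformOn B i ≠ 0) :
    i ∈ B := by
  by_contra hiB
  exact hi (if_neg hiB)

theorem uniformOn_mem_smoothDistributions {ε : ℝ} (hε : 0 < ε) (hn : 0 < n) {B : Finset (Fin n)}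
    (hB : ε * n ≤ #B) : uniformOn B ∈ smoothDistributions n ε := by
  have hBpos : (0 : ℝ) < #B := lt_of_lt_of_le (by positivity) hB
  refine ⟨⟨fun i => ?_, ?_⟩, fun i => ?_⟩
  · unfold uniformOn; split_ifs <;> positivity
  · simp [uniformOn, hBpos.ne']
  · unfold uniformOn; split_ifs
    · rw [one_div]; exact inv_anti₀ (by positivity) hB
    · positivity

noncomputable def weightedError (D h y : Fin n → ℝ) : ℝ :=
  ∑ i ∈ univ.filter (fun i => h i ≠ y i), D i

theorem weightedError_le_of_isSmooth {ε : ℝ} {D : Fin n → ℝ} (hD : IsSmooth ε D)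
    (h y : Fin n → ℝ) : weightedError D h y ≤ (#{i | h i ≠ y i} : ℝ) / n / ε :=
  calc weightedError D h y ≤ ∑ i ∈ univ.filter (fun i => h i ≠ y i), 1 / (ε * n) :=
        sum_le_sum fun i _ => hD i
    _ = (#{i | h i ≠ y i} : ℝ) / n / ε := by
        rw [sum_const, nsmul_eq_mul, mul_one_div, div_div, mul_comm ε]

theorem sInf_weightedError_le {H : Set (Fin n → ℝ)} (hH : H.Nonempty) {ε : ℝ} (hε : 0 < ε)
    {D : Fin n → ℝ} (hD0 : ∀ i, 0 ≤ D i) (hD : IsSmooth ε D) (y : Fin n → ℝ) :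
    sInf ((fun h' => weightedError D h' y) '' H) ≤
      sInf ((fun h' : Fin n → ℝ => (#{i | h' i ≠ y i} : ℝ) / n) '' H) / ε := by
  have hbdd : BddBelow ((fun h' => weightedError D h' y) '' H) :=
    ⟨0, by rintro _ ⟨h', -, rfl⟩; exact sum_nonneg fun i _ => hD0 i⟩
  rw [le_div_iff₀ hε]
  refine le_csInf (hH.image _) ?_
  rintro _ ⟨h', hh', rfl⟩
  rw [← le_div_iff₀ hε]
  exact (csInf_le hbdd ⟨h', hh', rfl⟩).trans (weightedError_le_of_isSmooth hD h' y)

noncomputable def lossWeight (γ : ℝ) (y h : Fin n → ℝ) (i : Fin n) : ℝ :=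
  if h i = y i then 1 - γ else 1

noncomputable def updateNormalizer (γ : ℝ) (y h D : Fin n → ℝ) : ℝ :=
  ∑ j, D j * lossWeight γ y h j

noncomputable def multiplicativeUpdate (γ : ℝ) (y h D : Fin n → ℝ) : Fin n → ℝ :=
  fun i => D i * lossWeight γ y h i / updateNormalizer γ y h D

section MultiplicativeUpdate

variable {γ : ℝ} {y h D : Fin n → ℝ}

theorem lossWeight_pos (hγ : γ < 1) (i : Fin n) : 0 < lossWeight γ y h i := by
  unfold lossWeight; split_ifs <;> linarith

theorem neg_log_lossWeight_le (hγ0 : 0 ≤ γ) (hγ : γ ≤ 1 / 2) (i : Fin n) :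
    -log (lossWeight γ y h i) ≤ (γ + γ ^ 2) * (if h i = y i then 1 else 0) := by
  unfold lossWeight
  split_ifs
  · simpa using neg_log_one_sub_le hγ0 hγ
  · simp

theorem updateNormalizer_eq (hD : IsDistribution D) :
    updateNormalizer γ y h D = 1 - γ * (1 - weightedError D h y) := by
  have hsplit := sum_filter_add_sum_filter_not univ (fun i => h i = y i) D
  calc updateNormalizer γ y h D = ∑ i, (D i - γ * if h i = y i then D i else 0) :=
        sum_congr rfl fun i _ => by unfold lossWeight; split_ifs <;> ring
    _ = 1 - γ * ∑ i ∈ univ.filter (fun i => h i = y i), D i := by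
        rw [sum_sub_distrib, ← mul_sum, ← sum_filter, hD.2]
    _ = 1 - γ * (1 - weightedError D h y) := by
        rw [weightedError, ← hD.2, ← hsplit]
        ring

theorem updateNormalizer_pos (hD : IsDistribution D) (hγ0 : 0 ≤ γ) (hγ1 : γ < 1) :
    0 < updateNormalizer γ y h D := by
  have herr : 0 ≤ weightedError D h y := sum_nonneg fun i _ => hD.1 i
  rw [updateNormalizer_eq hD]
  nlinarith

theorem updateNormalizer_le (hD : IsDistribution D) (hγ0 : 0 ≤ γ)
    (herr : weightedError D h y ≤ 1 / 2 - γ) :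
    updateNormalizer γ y h D ≤ 1 - γ * (1 / 2 + γ) := by
  rw [updateNormalizer_eq hD]
  nlinarith

theorem multiplicativeUpdate_pos (hD : IsDistribution D) (hDpos : ∀ i, 0 < D i) (hγ0 : 0 ≤ γ)
    (hγ1 : γ < 1) (i : Fin n) : 0 < multiplicativeUpdate γ y h D i :=
  div_pos (mul_pos (hDpos i) (lossWeight_pos hγ1 i)) (updateNormalizer_pos hD hγ0 hγ1)

theorem sum_multiplicativeUpdate (hZ : updateNormalizer γ y h D ≠ 0) :
    ∑ i, multiplicativeUpdate γ y h D i = 1 := by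
  unfold multiplicativeUpdate
  rw [← sum_div]
  exact div_self hZ

theorem RE_multiplicativeUpdate {p : Fin n → ℝ} (hp : IsDistribution p) (hD : IsDistribution D)
    (hDpos : ∀ i, 0 < D i) (hγ0 : 0 ≤ γ) (hγ1 : γ < 1) :
    RE p (multiplicativeUpdate γ y h D) =
      RE p D + (log (updateNormalizer γ y h D) - ∑ i, p i * log (lossWeight γ y h i)) :=
  RE_mul_div_eq hp hDpos (lossWeight_pos hγ1) (updateNormalizer_pos hD hγ0 hγ1)

end MultiplicativeUpdate

theorem sum_agreement_le_half_of_margin_nonpos {y : ℝ} (hy : y = -1 ∨ y = 1) {T : ℕ}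
    {a : ℕ → ℝ} (ha : ∀ t < T, a t = -1 ∨ a t = 1) (hm : y * ∑ t ∈ range T, a t ≤ 0) :
    ∑ t ∈ range T, (if a t = y then 1 else 0 : ℝ) ≤ T / 2 := by
  have hsign : ∀ t ∈ range T, y * a t = 2 * (if a t = y then 1 else 0) - 1 := fun t ht => by
    rcases hy with rfl | rfl <;> rcases ha t (mem_range.1 ht) with h | h <;> norm_num [h]
  rw [mul_sum, sum_congr rfl hsign, sum_sub_distrib, ← mul_sum] at hm
  simp only [sum_const, card_range, nsmul_eq_mul, mul_one] at hm
  linarith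

theorem sum_sum_agreement_le {y : Fin n → ℝ} (hy : ∀ i, y i = -1 ∨ y i = 1) {T : ℕ}
    {h : ℕ → Fin n → ℝ} (hh : ∀ t < T, ∀ i, h t i = -1 ∨ h t i = 1) {P : Fin n → ℝ}
    (hP : IsDistribution P) (hPB : ∀ i, P i ≠ 0 → y i * ∑ t ∈ range T, h t i ≤ 0) :
    ∑ t ∈ range T, ∑ i, P i * (if h t i = y i then 1 else 0) ≤ T / 2 := by
  rw [sum_comm]
  calc ∑ i, ∑ t ∈ range T, P i * (if h t i = y i then 1 else 0)
      = ∑ i, P i * ∑ t ∈ range T, (if h t i = y i then 1 else 0) := by simp only [mul_sum]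
    _ ≤ ∑ i, P i * (T / 2) := sum_le_sum fun i _ => by
        by_cases hPi : P i = 0
        · simp [hPi]
        exact mul_le_mul_of_nonneg_left (sum_agreement_le_half_of_margin_nonpos (hy i)
          (fun t ht => hh t ht i) (hPB i hPi)) (hP.1 i)
    _ = T / 2 := by rw [← sum_mul, hP.2, one_mul]

theorem sum_log_updateNormalizer_sub_le {γ : ℝ} (hγ0 : 0 ≤ γ) (hγ : γ ≤ 1 / 2) {y : Fin n → ℝ}
    (hy : ∀ i, y i = -1 ∨ y i = 1) {T : ℕ} {h D : ℕ → Fin n → ℝ}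
    (hh : ∀ t < T, ∀ i, h t i = -1 ∨ h t i = 1) (hD : ∀ t < T, IsDistribution (D t))
    (herr : ∀ t < T, weightedError (D t) (h t) y ≤ 1 / 2 - γ) {P : Fin n → ℝ}
    (hP : IsDistribution P) (hPB : ∀ i, P i ≠ 0 → y i * ∑ t ∈ range T, h t i ≤ 0) :
    ∑ t ∈ range T, (log (updateNormalizer γ y (h t) (D t)) -
      ∑ i, P i * log (lossWeight γ y (h t) i)) ≤ -(T * γ ^ 2 / 2) := by
  have hlogZ : ∑ t ∈ range T, log (updateNormalizer γ y (h t) (D t)) ≤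
      T * -(γ * (1 / 2 + γ)) := by
    simpa using sum_le_card_nsmul (range T) _ (-(γ * (1 / 2 + γ))) fun t ht => by
      have ht := mem_range.1 ht
      linarith [log_le_sub_one_of_pos (updateNormalizer_pos (y := y) (h := h t) (hD t ht) hγ0
        (by linarith)), updateNormalizer_le (hD t ht) hγ0 (herr t ht)]
  have hloss :
      -∑ t ∈ range T, ∑ i, P i * log (lossWeight γ y (h t) i) ≤ (γ + γ ^ 2) * (T / 2) :=
    calc -∑ t ∈ range T, ∑ i, P i * log (lossWeight γ y (h t) i)
        = ∑ t ∈ range T, ∑ i, P i * -log (lossWeight γ y (h t) i) := by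
          simp only [mul_neg, sum_neg_distrib]
      _ ≤ ∑ t ∈ range T, ∑ i, P i * ((γ + γ ^ 2) * if h t i = y i then 1 else 0) := by
          gcongr with t _ i
          exacts [hP.1 i, neg_log_lossWeight_le hγ0 hγ i]
      _ = (γ + γ ^ 2) * ∑ t ∈ range T, ∑ i, P i * (if h t i = y i then 1 else 0) := by
          simp only [mul_sum, mul_left_comm]
      _ ≤ (γ + γ ^ 2) * (T / 2) := by
          gcongr
          exact sum_sum_agreement_le hy hh hP hPB
  rw [sum_sub_distrib]
  linarith

structure IsSmoothBoosting (ε γ : ℝ) (y : Fin n → ℝ) (h D : ℕ → Fin n → ℝ) (T : ℕ) : Prop where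
  uniform_zero : ∀ i, D 0 i = 1 / n
  mem_smooth : ∀ t < T, D t ∈ smoothDistributions n ε
  isMinOn_RE : ∀ t, t + 1 < T → IsMinOn (RE · (multiplicativeUpdate γ y (h t) (D t)))
    (smoothDistributions n ε) (D (t + 1))

namespace IsSmoothBoosting

variable {ε γ : ℝ} {y : Fin n → ℝ} {h D : ℕ → Fin n → ℝ} {T : ℕ}

theorem pos (hrun : IsSmoothBoosting ε γ y h D T) (hn : 0 < n) (hε : 0 < ε) (hγ0 : 0 ≤ γ)
    (hγ1 : γ < 1) : ∀ t < T, ∀ i, 0 < D t i := by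
  intro t
  induction t with
  | zero => intro _ i; rw [hrun.uniform_zero]; positivity
  | succ t ih =>
    intro ht
    exact pos_of_isMinOn_smoothDistributions hε
      (multiplicativeUpdate_pos (hrun.mem_smooth t (by omega)).1 (ih (by omega)) hγ0 hγ1)
      (hrun.mem_smooth (t + 1) ht) (hrun.isMinOn_RE t ht)

theorem nonneg_log_add_sum (hrun : IsSmoothBoosting ε γ y h D T) (hn : 0 < n) (hε : 0 < ε)
    (hγ0 : 0 ≤ γ) (hγ1 : γ < 1) {P : Fin n → ℝ} (hP : P ∈ smoothDistributions n ε) :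
    0 ≤ log (1 / ε) + ∑ t ∈ range T, (log (updateNormalizer γ y (h t) (D t)) -
      ∑ i, P i * log (lossWeight γ y (h t) i)) := by
  have hpos := hrun.pos hn hε hγ0 hγ1
  have hdist t (ht : t < T) := (hrun.mem_smooth t ht).1
  have hZ t (ht : t < T) := updateNormalizer_pos (y := y) (h := h t) (hdist t ht) hγ0 hγ1
  have hupd t (ht : t < T) := multiplicativeUpdate_pos (y := y) (h := h t) (hdist t ht)
    (hpos t ht) hγ0 hγ1
  have hRE t (ht : t < T) := RE_multiplicativeUpdate (y := y) (h := h t) hP.1 (hdist t ht)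
    (hpos t ht) hγ0 hγ1
  have hD0 : D 0 = fun _ => 1 / (n : ℝ) := funext hrun.uniform_zero
  have h0 : 0 ≤ RE P (D 0) := by
    refine RE_nonneg hP.1 (fun i => by rw [hD0]; positivity) (le_of_eq ?_)
    simp [hD0, hn.ne']
  have htele := nonneg_add_sum_of_le_add (Φ := fun t => RE P (D t)) h0
    (fun t ht => (RE_le_RE_of_isMinOn (convex_smoothDistributions ε) (fun _ hQ => hQ.1)
      (hupd t (by omega)) (sum_multiplicativeUpdate (hZ t (by omega)).ne').le
      (hpos (t + 1) ht) (hrun.mem_smooth (t + 1) ht) (hrun.isMinOn_RE t ht) hP).trans_eq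
      (hRE t (by omega)))
    (fun t ht => (RE_nonneg hP.1 (hupd t ht)
      (sum_multiplicativeUpdate (hZ t ht).ne').le).trans_eq (hRE t ht))
  have hinit : RE P (D 0) ≤ log (1 / ε) := hD0 ▸ RE_uniform_le hε hP
  linarith

theorem card_margin_nonpos_lt (hrun : IsSmoothBoosting ε γ y h D T) (hn : 0 < n)
    (hy : ∀ i, y i = -1 ∨ y i = 1) (hh : ∀ t < T, ∀ i, h t i = -1 ∨ h t i = 1)
    (hγ0 : 0 < γ) (hγ : γ ≤ 1 / 2) (hε : 0 < ε) (hT : log (1 / ε) < T * γ ^ 2 / 2)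
    (herr : ∀ t < T, weightedError (D t) (h t) y ≤ 1 / 2 - γ) :
    (#{i | y i * ∑ t ∈ range T, h t i ≤ 0} : ℝ) < ε * n := by
  by_contra! hB
  have hP := uniformOn_mem_smoothDistributions hε hn hB
  have hPB : ∀ i, uniformOn {i | y i * ∑ t ∈ range T, h t i ≤ 0} i ≠ 0 →
      y i * ∑ t ∈ range T, h t i ≤ 0 := fun i hi => by
    simpa using mem_of_uniformOn_ne_zero hi
  have hpot := hrun.nonneg_log_add_sum hn hε hγ0.le (by linarith) hP
  have hdrop := sum_log_updateNormalizer_sub_le hγ0.le hγ hy hh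
    (fun t ht => (hrun.mem_smooth t ht).1) herr hP.1 hPB
  linarith

end IsSmoothBoosting

theorem smooth_boosting_agnostic_general
    (n : ℕ) (hn : 1 ≤ n)
    (y : Fin n → ℝ) (hy : ∀ i, y i = -1 ∨ y i = 1)
    (H : Set (Fin n → ℝ)) (hHne : H.Nonempty)
    (opt : ℝ)
    (hopt : opt = sInf ((fun h' : Fin n → ℝ =>
      ((Finset.univ.filter (fun i => h' i ≠ y i)).card : ℝ) / n) '' H))
    (β : ℝ) (hβ0 : 0 ≤ β) (hβ : β < 1 / 2)
    (γ : ℝ) (hγ : γ = (1 / 2) * (1 / 2 - β))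
    (ε : ℝ) (hε : 0 < ε)
    (ε'' : ℝ) (hε'' : ε'' = 2 * opt / (1 / 2 - β) + ε)
    (T : ℕ) (hT : (T : ℝ) > 2 * Real.log (1 / ε'') / γ ^ 2)
    (h : ℕ → Fin n → ℝ) (hh : ∀ t < T, ∀ i, h t i = -1 ∨ h t i = 1)
    (D : ℕ → Fin n → ℝ)
    (hDdist : ∀ t < T, IsDistribution (D t))
    -- (i) the first distribution is uniform
    (hD0 : ∀ i, D 0 i = 1 / n)
    -- (ii) each distribution is ε''-smooth
    (hDsmooth : ∀ t < T, IsSmooth ε'' (D t))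
    -- (iii) β-weak agnostic learner
    (hweak : ∀ t < T,
      ∑ i ∈ Finset.univ.filter (fun i => h t i ≠ y i), D t i ≤
        sInf ((fun h' : Fin n → ℝ =>
          ∑ i ∈ Finset.univ.filter (fun i => h' i ≠ y i), D t i) '' H) + β)
    -- (iv) multiplicative update followed by relative-entropy projection onto
    -- the set of ε''-smooth distributions
    (hupdate : ∀ t, t + 1 < T →
      ∀ Dp : Fin n → ℝ, IsDistribution Dp → IsSmooth ε'' Dp →
        RE (D (t + 1))
            (fun i => D t i * (if h t i = y i then 1 - γ else 1) /
              (∑ j, D t j * (if h t j = y j then 1 - γ else 1))) ≤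
          RE Dp
            (fun i => D t i * (if h t i = y i then 1 - γ else 1) /
              (∑ j, D t j * (if h t j = y j then 1 - γ else 1)))) :
    ((Finset.univ.filter
        (fun i : Fin n => y i * ∑ t ∈ Finset.range T, h t i ≤ 0)).card : ℝ) <
      (2 * opt / (1 / 2 - β) + ε) * n := by
  have hopt0 : 0 ≤ opt := hopt ▸ Real.sInf_nonneg (by rintro _ ⟨h', -, rfl⟩; positivity)
  have hβ' : 0 < 1 / 2 - β := by linarith
  have hε''0 : 0 < ε'' := by rw [hε'']; positivity
  have hγ0 : 0 < γ := by rw [hγ]; positivity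
  have hoptγ : opt / ε'' ≤ γ := by
    have hcancel : γ * (2 * opt / (1 / 2 - β)) = opt := by
      rw [hγ]
      field_simp
      exact mul_div_cancel_left₀ _ (by linarith)
    rw [div_le_iff₀ hε''0, hε'', mul_add, hcancel]
    linarith [mul_pos hγ0 hε]
  have hedge : ∀ t < T, weightedError (D t) (h t) y ≤ 1 / 2 - γ := fun t ht => by
    have hw : weightedError (D t) (h t) y ≤
        sInf ((fun h' => weightedError (D t) h' y) '' H) + β := hweak t ht
    have hinf := sInf_weightedError_le hHne hε''0 (hDdist t ht).1 (hDsmooth t ht) y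
    rw [← hopt] at hinf
    linarith
  have hrun : IsSmoothBoosting ε'' γ y h D T :=
    ⟨hD0, fun t ht => ⟨hDdist t ht, hDsmooth t ht⟩, fun t ht P hP => hupdate t ht P hP.1 hP.2⟩
  rw [gt_iff_lt, div_lt_iff₀ (by positivity)] at hT
  rw [← hε'']
  exact hrun.card_margin_nonpos_lt hn hy hh hγ0 (by linarith) hε''0 (by linarith) hedge

/-- Theorem 2: the smooth boosting algorithm with a β-weak agnostic learner
achieves error rate `2·err_S(H)/(1/2-β) + ε` on the sample. -/
theorem smooth_boosting_agnostic
    (n : ℕ) (hn : 1 ≤ n)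
    (y : Fin n → ℝ) (hy : ∀ i, y i = -1 ∨ y i = 1)
    (H : Set (Fin n → ℝ)) (hHne : H.Nonempty)
    (hHval : ∀ h' ∈ H, ∀ i, h' i = -1 ∨ h' i = 1)
    (opt : ℝ)
    (hopt : opt = sInf ((fun h' : Fin n → ℝ =>
      ((Finset.univ.filter (fun i => h' i ≠ y i)).card : ℝ) / n) '' H))
    (β : ℝ) (hβ0 : 0 ≤ β) (hβ : β < 1 / 2)
    (γ : ℝ) (hγ : γ = (1 / 2) * (1 / 2 - β))
    (ε : ℝ) (hε : 0 < ε) (hε1 : ε ≤ 1)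
    (ε'' : ℝ) (hε'' : ε'' = 2 * opt / (1 / 2 - β) + ε) (hε''1 : ε'' ≤ 1)
    (T : ℕ) (hT : (T : ℝ) > 2 * Real.log (1 / ε'') / γ ^ 2)
    (h : ℕ → Fin n → ℝ) (hh : ∀ t < T, ∀ i, h t i = -1 ∨ h t i = 1)
    (D : ℕ → Fin n → ℝ)
    (hDdist : ∀ t < T, IsDistribution (D t))
    -- (i) the first distribution is uniform
    (hD0 : ∀ i, D 0 i = 1 / n)
    -- (ii) each distribution is ε''-smooth
    (hDsmooth : ∀ t < T, IsSmooth ε'' (D t))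
    -- (iii) β-weak agnostic learner
    (hweak : ∀ t < T,
      ∑ i ∈ Finset.univ.filter (fun i => h t i ≠ y i), D t i ≤
        sInf ((fun h' : Fin n → ℝ =>
          ∑ i ∈ Finset.univ.filter (fun i => h' i ≠ y i), D t i) '' H) + β)
    -- (iv) multiplicative update followed by relative-entropy projection onto
    -- the set of ε''-smooth distributions
    (hupdate : ∀ t, t + 1 < T →
      ∀ Dp : Fin n → ℝ, IsDistribution Dp → IsSmooth ε'' Dp →
        RE (D (t + 1))
            (fun i => D t i * (if h t i = y i then 1 - γ else 1) /
              (∑ j, D t j * (if h t j = y j then 1 - γ else 1))) ≤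
          RE Dp
            (fun i => D t i * (if h t i = y i then 1 - γ else 1) /
              (∑ j, D t j * (if h t j = y j then 1 - γ else 1)))) :
    ((Finset.univ.filter
        (fun i : Fin n => y i * ∑ t ∈ Finset.range T, h t i ≤ 0)).card : ℝ) <
      (2 * opt / (1 / 2 - β) + ε) * n :=
  smooth_boosting_agnostic_general n hn y hy H hHne opt hopt β hβ0 hβ γ hγ ε hε ε'' hε'' T hT h hh D
    hDdist hD0 hDsmooth hweak hupdate
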